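/- arXiv:2109.05543 — 4 statements merged into one kernel-verified Lean document; each statement's English description precedes it below -/
import Mathlib

section
/- Let H be an open affine half-space in ℝ^N, let Ω ⊊ ℝ^N be a nonempty open set satisfying Ω = Ω_H, and let f : Ω → ℝ be a nonnegative measurable function. Then the polarization f_H (defined on Ω via the zero extension of f) is a rearrangement of f: for every t ∈ ℝ, the Lebesgue measure of {x ∈ Ω : f_H(x) > t} equals the Lebesgue measure of {x ∈ Ω : f(x) > t}. -/
open MeasureTheory
open scoped RealInnerProductSpace ENNReal

/-- Reflection of `ℝ^N` across the hyperplane `{x : ⟪x, u⟫ = c}` (for a unit vector `u`). -/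
noncomputable def reflHyp {N : ℕ} (u : EuclideanSpace ℝ (Fin N)) (c : ℝ)
    (x : EuclideanSpace ℝ (Fin N)) : EuclideanSpace ℝ (Fin N) :=
  x - (2 * (⟪x, u⟫ - c)) • u

/-- The open affine half-space `{x : ⟪x, u⟫ < c}`. -/
def halfSpace {N : ℕ} (u : EuclideanSpace ℝ (Fin N)) (c : ℝ) :
    Set (EuclideanSpace ℝ (Fin N)) :=
  {x | ⟪x, u⟫ < c}

/-- Polarization of a set `Ω` with respect to the half-space `H = halfSpace u c`:
`Ω_H = ((Ω ∪ σ_H(Ω)) ∩ H) ∪ (Ω ∩ σ_H(Ω))`. -/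
noncomputable def polSet {N : ℕ} (u : EuclideanSpace ℝ (Fin N)) (c : ℝ)
    (Ω : Set (EuclideanSpace ℝ (Fin N))) : Set (EuclideanSpace ℝ (Fin N)) :=
  ((Ω ∪ reflHyp u c '' Ω) ∩ halfSpace u c) ∪ (Ω ∩ reflHyp u c '' Ω)

/-- Polarization of a function `f : ℝ^N → ℝ` with respect to `H = halfSpace u c`:
`f_H(x) = max (f x) (f (σ_H x))` if `x ∈ H`, and `f_H(x) = min (f x) (f (σ_H x))` otherwise. -/
noncomputable def polFun {N : ℕ} (u : EuclideanSpace ℝ (Fin N)) (c : ℝ)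
    (f : EuclideanSpace ℝ (Fin N) → ℝ) (x : EuclideanSpace ℝ (Fin N)) : ℝ :=
  if ⟪x, u⟫ < c then max (f x) (f (reflHyp u c x))
  else min (f x) (f (reflHyp u c x))

/-! Superlevel sets of `polFun u c g` are the polarizations of the superlevel sets of `g`, and
polarization of sets preserves Lebesgue measure: the reflection `σ` preserves volume and, up to
the null hyperplane `∂H`, swaps `H` with its complement, so with `B = σ⁻¹ A`
`|(A ∪ B) ∩ H| + |(A ∩ B) \ H| = |(A ∪ B) ∩ H| + |A ∩ B ∩ H|`
`= |A ∩ H| + |B ∩ H| = |A ∩ H| + |A \ H|`.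
For `t ≥ 0` the superlevel sets of the zero extension lie in `Ω`, hence so do their polarizations
since `Ω_H = Ω`; for `t < 0` both sets are all of `Ω`. -/

theorem sep_lt_eq_setOf_lt_indicator {α : Type*} {s : Set α} {f : α → ℝ} {t : ℝ}
    (ht : 0 ≤ t) : {x ∈ s | t < f x} = {x | t < s.indicator f x} := by
  ext x
  by_cases hx : x ∈ s <;> simp [hx, ht]

section

variable {N : ℕ} {u : EuclideanSpace ℝ (Fin N)} {c : ℝ}

theorem volume_setOf_inner_eq (hu : u ≠ 0) :
    volume {x : EuclideanSpace ℝ (Fin N) | ⟪x, u⟫ = c} = 0 := by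
  let φ : EuclideanSpace ℝ (Fin N) →ᵃ[ℝ] ℝ := (innerSL ℝ u).toLinearMap.toAffineMap
  have hφ : {x | ⟪x, u⟫ = c} = (affineSpan ℝ {c}).comap φ := by
    ext x
    simp [φ, real_inner_comm]
  rw [hφ]
  refine Measure.addHaar_affineSubspace _ _ fun htop => hu ?_
  have h0 : 0 ∈ (affineSpan ℝ {c}).comap φ := htop ▸ AffineSubspace.mem_top _ _ _
  have h1 : u ∈ (affineSpan ℝ {c}).comap φ := htop ▸ AffineSubspace.mem_top _ _ _
  simp only [φ, AffineSubspace.mem_comap, AffineSubspace.mem_affineSpan_singleton,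
    LinearMap.coe_toAffineMap, ContinuousLinearMap.coe_coe, innerSL_apply_apply,
    inner_zero_right] at h0 h1
  exact inner_self_eq_zero.1 (h0 ▸ h1)

theorem inner_reflHyp (hu : ‖u‖ = 1) (x : EuclideanSpace ℝ (Fin N)) :
    ⟪reflHyp u c x, u⟫ = 2 * c - ⟪x, u⟫ := by
  rw [reflHyp, inner_sub_left, real_inner_smul_left, real_inner_self_eq_norm_sq, hu]
  ring

theorem reflHyp_involutive (hu : ‖u‖ = 1) : Function.Involutive (reflHyp u c) := fun x => by
  rw [reflHyp, inner_reflHyp hu, reflHyp]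
  module

theorem image_reflHyp (hu : ‖u‖ = 1) (A : Set (EuclideanSpace ℝ (Fin N))) :
    reflHyp u c '' A = reflHyp u c ⁻¹' A :=
  congrFun (reflHyp_involutive hu).image_eq_preimage_symm A

theorem reflHyp_eq_reflection_add (hu : ‖u‖ = 1) (x : EuclideanSpace ℝ (Fin N)) :
    reflHyp u c x = (ℝ ∙ u)ᗮ.reflection x + (2 * c) • u := by
  rw [Submodule.reflection_orthogonal_apply, Submodule.reflection_singleton_apply, hu,
    real_inner_comm, reflHyp]
  push_cast
  module

theorem measurePreserving_reflHyp (hu : ‖u‖ = 1) :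
    MeasurePreserving (reflHyp u c) volume volume := by
  have : reflHyp u c = (· + (2 * c) • u) ∘ (ℝ ∙ u)ᗮ.reflection :=
    funext (reflHyp_eq_reflection_add hu)
  rw [this]
  exact (measurePreserving_add_right volume _).comp (ℝ ∙ u)ᗮ.reflection.measurePreserving

theorem preimage_reflHyp_halfSpace_ae_eq (hu : ‖u‖ = 1) :
    reflHyp u c ⁻¹' halfSpace u c =ᵐ[volume] (halfSpace u c)ᶜ := by
  have hnull := volume_setOf_inner_eq (N := N) (c := c) (norm_ne_zero_iff.1 (hu ▸ one_ne_zero))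
  filter_upwards [measure_eq_zero_iff_ae_notMem.1 hnull] with x (hx : ⟪x, u⟫ ≠ c)
  change (⟪reflHyp u c x, u⟫ < c) = ¬(⟪x, u⟫ < c)
  rw [inner_reflHyp hu, eq_iff_iff, not_lt]
  constructor <;> intro h
  · linarith
  · linarith [lt_of_le_of_ne h hx.symm]

theorem volume_preimage_reflHyp_inter_halfSpace (hu : ‖u‖ = 1)
    {S : Set (EuclideanSpace ℝ (Fin N))} (hS : MeasurableSet S) :
    volume (reflHyp u c ⁻¹' S ∩ halfSpace u c) = volume (S \ halfSpace u c) := by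
  have hH : MeasurableSet (halfSpace u c) :=
    measurableSet_lt (by fun_prop) measurable_const
  have hσ := measurePreserving_reflHyp (c := c) hu
  calc volume (reflHyp u c ⁻¹' S ∩ halfSpace u c)
      = volume (reflHyp u c ⁻¹' (S ∩ reflHyp u c ⁻¹' halfSpace u c)) := by
        rw [Set.preimage_inter, ← Set.preimage_comp, (reflHyp_involutive hu).comp_self,
          Set.preimage_id]
    _ = volume (S ∩ reflHyp u c ⁻¹' halfSpace u c) :=
        hσ.measure_preimage (hS.inter (hσ.measurable hH)).nullMeasurableSet
    _ = volume (S \ halfSpace u c) :=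
        measure_congr ((Filter.EventuallyEq.refl _ S).inter (preimage_reflHyp_halfSpace_ae_eq hu))

theorem polSet_mono : Monotone (polSet u c) := fun A B hAB => by
  unfold polSet
  gcongr

theorem volume_polSet (hu : ‖u‖ = 1) {A : Set (EuclideanSpace ℝ (Fin N))}
    (hA : MeasurableSet A) : volume (polSet u c A) = volume A := by
  set H := halfSpace u c
  set B := reflHyp u c ⁻¹' A
  have hH : MeasurableSet H := measurableSet_lt (by fun_prop) measurable_const
  have hB : MeasurableSet B := (measurePreserving_reflHyp hu).measurable hA
  have hAB : reflHyp u c ⁻¹' (A ∩ B) = A ∩ B := by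
    rw [Set.preimage_inter, ← Set.preimage_comp, (reflHyp_involutive hu).comp_self,
      Set.preimage_id, Set.inter_comm]
  have hP : polSet u c A = ((A ∪ B) ∩ H) ∪ ((A ∩ B) \ H) := by
    rw [polSet, image_reflHyp hu]
    ext x
    simp only [Set.mem_union, Set.mem_inter_iff, Set.mem_sdiff]
    tauto
  calc volume (polSet u c A)
      = volume ((A ∪ B) ∩ H) + volume ((A ∩ B) \ H) := by
        rw [hP, measure_union (by tauto_set) ((hA.inter hB).diff hH)]
    _ = volume ((A ∩ H) ∪ (B ∩ H)) + volume ((A ∩ H) ∩ (B ∩ H)) := by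
        rw [← volume_preimage_reflHyp_inter_halfSpace hu (hA.inter hB), hAB,
          Set.union_inter_distrib_right, Set.inter_inter_distrib_right]
    _ = volume (A ∩ H) + volume (B ∩ H) := measure_union_add_inter _ (hB.inter hH)
    _ = volume (A ∩ H) + volume (A \ H) := by
        rw [volume_preimage_reflHyp_inter_halfSpace hu hA]
    _ = volume A := measure_inter_add_sdiff _ hH

theorem setOf_lt_polFun (hu : ‖u‖ = 1) (g : EuclideanSpace ℝ (Fin N) → ℝ) (t : ℝ) :
    {x | t < polFun u c g x} = polSet u c {x | t < g x} := by
  ext x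
  simp only [polFun, polSet, image_reflHyp hu, halfSpace, Set.mem_union, Set.mem_inter_iff,
    Set.mem_preimage, Set.mem_ofPred_eq]
  split_ifs with hx
  · simp only [lt_max_iff]; tauto
  · simp only [lt_min_iff]; tauto

theorem polFun_nonneg {g : EuclideanSpace ℝ (Fin N) → ℝ} (hg : 0 ≤ g)
    (x : EuclideanSpace ℝ (Fin N)) : 0 ≤ polFun u c g x := by
  unfold polFun
  split_ifs
  · exact le_max_of_le_left (hg x)
  · exact le_min (hg x) (hg _)

end

theorem polFun_is_rearrangement_general {N : ℕ}
    (u : EuclideanSpace ℝ (Fin N)) (hu : ‖u‖ = 1) (c : ℝ)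
    (Ω : Set (EuclideanSpace ℝ (Fin N))) (hΩ : Ω = polSet u c Ω)
    (f : EuclideanSpace ℝ (Fin N) → ℝ) (hmeas : Measurable (Ω.indicator f))
    (hf : ∀ x ∈ Ω, 0 ≤ f x) :
    ∀ t : ℝ, volume {x ∈ Ω | t < polFun u c (Ω.indicator f) x} = volume {x ∈ Ω | t < f x} := by
  intro t
  rcases lt_or_ge t 0 with ht | ht
  · have hpol : 0 ≤ polFun u c (Ω.indicator f) := polFun_nonneg (Set.indicator_nonneg hf)
    rw [Set.sep_eq_self_iff_mem_true.2 fun x hx => ht.trans_le (hf x hx),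
      Set.sep_eq_self_iff_mem_true.2 fun x _ => ht.trans_le (hpol x)]
  · set A := {x | t < Ω.indicator f x}
    have hA : {x ∈ Ω | t < f x} = A := sep_lt_eq_setOf_lt_indicator ht
    have hpolA : polSet u c A ⊆ Ω :=
      (polSet_mono (hA ▸ Set.sep_subset _ _)).trans hΩ.symm.subset
    calc volume {x ∈ Ω | t < polFun u c (Ω.indicator f) x}
        = volume (Ω ∩ polSet u c A) := by rw [← setOf_lt_polFun hu]; rfl
      _ = volume A := by
        rw [Set.inter_eq_right.2 hpolA,
          volume_polSet hu (measurableSet_lt measurable_const hmeas)]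
      _ = volume {x ∈ Ω | t < f x} := by rw [hA]

/-- If `Ω ⊊ ℝ^N` is a nonempty open set with `Ω = Ω_H` and `f : Ω → ℝ` is a
nonnegative measurable function, then the polarization `f_H` (via the zero extension) is a
rearrangement of `f` on `Ω`. -/
theorem polFun_is_rearrangement {N : ℕ}
    (u : EuclideanSpace ℝ (Fin N)) (hu : ‖u‖ = 1) (c : ℝ)
    (Ω : Set (EuclideanSpace ℝ (Fin N))) (hne : Ω.Nonempty) (hopen : IsOpen Ω)
    (hproper : Ω ≠ Set.univ) (hΩ : Ω = polSet u c Ω)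
    (f : EuclideanSpace ℝ (Fin N) → ℝ) (hmeas : Measurable (Ω.indicator f))
    (hf : ∀ x ∈ Ω, 0 ≤ f x) :
    ∀ t : ℝ, volume {x ∈ Ω | t < polFun u c (Ω.indicator f) x} = volume {x ∈ Ω | t < f x} :=
  polFun_is_rearrangement_general u hu c Ω hΩ f hmeas hf
end

section
/- Let p ∈ (1, ∞), let H be an open affine half-space in ℝ^N with 0 ∈ closure(H), and let v, w ∈ L^p(ℝ^N) be such that the product v·w is Lebesgue integrable on ℝ^N and the product v_H·w_H of their polarizations is Lebesgue integrable on ℝ^N. Then ∫_{ℝ^N} v(x) w(x) dx ≤ ∫_{ℝ^N} v_H(x) w_H(x) dx. -/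
/-!
The reflection `σ_H` preserves Lebesgue measure, so `∫ v w = ½ ∫ (v w + (v w) ∘ σ_H)` and likewise
for `v_H w_H`. It therefore suffices to compare the integrands pointwise. On the pair `{x, σ_H x}`
the polarization replaces `(v x, v (σ_H x))` by the same two values sorted (the larger one on the
side of `H`), and similarly for `w`; by the rearrangement inequality `a b + a' b' ≤ max a a' ·
max b b' + min a a' · min b b'`, pairing sorted values can only increase the sum of products.
-/

open MeasureTheory
open scoped RealInnerProductSpace ENNReal

theorem mul_add_mul_le_max_mul_max_add_min_mul_min {R : Type*} [CommRing R] [LinearOrder R]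
    [IsStrictOrderedRing R] (a a' b b' : R) :
    a * b + a' * b' ≤ max a a' * max b b' + min a a' * min b b' := by
  rcases le_total a a' with ha | ha <;> rcases le_total b b' with hb | hb <;>
    simp only [max_eq_left, max_eq_right, min_eq_left, min_eq_right, ha, hb] <;>
    nlinarith [mul_nonneg (sub_nonneg.2 ha) (sub_nonneg.2 hb)]

theorem integral_le_integral_of_add_comp_le {α : Type*} [MeasurableSpace α] {μ : Measure α}
    {σ : α → α} (hσ : MeasurePreserving σ μ μ) (hσe : MeasurableEmbedding σ) {f g : α → ℝ}
    (hf : Integrable f μ) (hg : Integrable g μ) (hfg : ∀ x, f x + f (σ x) ≤ g x + g (σ x)) :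
    ∫ x, f x ∂μ ≤ ∫ x, g x ∂μ := by
  have hfσ : Integrable (f ∘ σ) μ := (hσ.integrable_comp_emb hσe).2 hf
  have hgσ : Integrable (g ∘ σ) μ := (hσ.integrable_comp_emb hσe).2 hg
  have key := integral_mono (hf.add hfσ) (hg.add hgσ) hfg
  simp only [Pi.add_apply] at key
  rw [integral_add hf hfσ, integral_add hg hgσ] at key
  simp only [Function.comp_def, hσ.integral_comp hσe] at key
  linarith

namespace reflHyp

variable {N : ℕ} {u : EuclideanSpace ℝ (Fin N)} (c : ℝ)

theorem inner_apply (hu : ‖u‖ = 1) (x : EuclideanSpace ℝ (Fin N)) :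
    ⟪reflHyp u c x, u⟫ = 2 * c - ⟪x, u⟫ := by
  simp only [reflHyp, inner_sub_left, real_inner_smul_left,
    real_inner_self_eq_norm_sq, hu]
  ring

theorem involutive (hu : ‖u‖ = 1) : Function.Involutive (reflHyp u c) := by
  intro x
  simp only [reflHyp, inner_sub_left, real_inner_smul_left,
    real_inner_self_eq_norm_sq, hu]
  module

theorem apply_eq_self_of_inner_eq {x : EuclideanSpace ℝ (Fin N)} (hx : ⟪x, u⟫ = c) :
    reflHyp u c x = x := by
  simp [reflHyp, hx]

theorem eq_reflection_add (hu : ‖u‖ = 1) :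
    reflHyp u c = fun x => (ℝ ∙ u)ᗮ.reflection x + (2 * c) • u := by
  funext x
  rw [Submodule.reflection_orthogonal_apply, Submodule.reflection_singleton_apply, reflHyp, hu,
    real_inner_comm]
  module

theorem measurePreserving (hu : ‖u‖ = 1) : MeasurePreserving (reflHyp u c) volume volume := by
  rw [eq_reflection_add c hu]
  exact (measurePreserving_add_right volume _).comp
    (LinearIsometryEquiv.measurePreserving _)

theorem measurableEmbedding (hu : ‖u‖ = 1) : MeasurableEmbedding (reflHyp u c) :=
  (MeasurableEquiv.ofInvolutive _ (involutive c hu)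
    (by unfold reflHyp; fun_prop)).measurableEmbedding

end reflHyp

section polFun

variable {N : ℕ} {u : EuclideanSpace ℝ (Fin N)} {c : ℝ}

theorem mul_add_mul_reflHyp_le_polFun_of_lt (hu : ‖u‖ = 1) (f g : EuclideanSpace ℝ (Fin N) → ℝ)
    {x : EuclideanSpace ℝ (Fin N)} (hx : ⟪x, u⟫ < c) :
    f x * g x + f (reflHyp u c x) * g (reflHyp u c x) ≤
      polFun u c f x * polFun u c g x +
        polFun u c f (reflHyp u c x) * polFun u c g (reflHyp u c x) := by
  have hσx : ¬ ⟪reflHyp u c x, u⟫ < c := by rw [reflHyp.inner_apply c hu]; linarith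
  simp only [polFun, if_pos hx, if_neg hσx, reflHyp.involutive c hu x]
  rw [min_comm (f _), min_comm (g _)]
  exact mul_add_mul_le_max_mul_max_add_min_mul_min _ _ _ _

theorem mul_add_mul_reflHyp_le_polFun (hu : ‖u‖ = 1) (f g : EuclideanSpace ℝ (Fin N) → ℝ)
    (x : EuclideanSpace ℝ (Fin N)) :
    f x * g x + f (reflHyp u c x) * g (reflHyp u c x) ≤
      polFun u c f x * polFun u c g x +
        polFun u c f (reflHyp u c x) * polFun u c g (reflHyp u c x) := by
  rcases lt_trichotomy ⟪x, u⟫ c with hx | hx | hx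
  · exact mul_add_mul_reflHyp_le_polFun_of_lt hu f g hx
  · simp only [polFun, reflHyp.apply_eq_self_of_inner_eq c hx, hx, lt_irrefl, if_false, min_self,
      le_refl]
  · have hσx : ⟪reflHyp u c x, u⟫ < c := by rw [reflHyp.inner_apply c hu]; linarith
    have := mul_add_mul_reflHyp_le_polFun_of_lt hu f g hσx
    rw [reflHyp.involutive c hu x] at this
    linarith

end polFun

theorem polFun_hardy_littlewood_general {N : ℕ}
    (u : EuclideanSpace ℝ (Fin N)) (hu : ‖u‖ = 1) (c : ℝ)
    (v w : EuclideanSpace ℝ (Fin N) → ℝ)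
    (hvw : Integrable (fun x => v x * w x) volume)
    (hvwH : Integrable (fun x => polFun u c v x * polFun u c w x) volume) :
    ∫ x, v x * w x ≤ ∫ x, polFun u c v x * polFun u c w x :=
  integral_le_integral_of_add_comp_le (reflHyp.measurePreserving c hu)
    (reflHyp.measurableEmbedding c hu) hvw hvwH (mul_add_mul_reflHyp_le_polFun hu v w)

/-- (Hardy–Littlewood inequality for polarization on `ℝ^N`.) For `p ∈ (1, ∞)`,
a half-space `H` with `0 ∈ closure H`, and `v, w ∈ L^p(ℝ^N)` with `v·w` and `v_H·w_H`
integrable, one has `∫ v w ≤ ∫ v_H w_H`. -/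
theorem polFun_hardy_littlewood {N : ℕ} (p : ℝ≥0∞) (hp1 : 1 < p) (hptop : p ≠ ⊤)
    (u : EuclideanSpace ℝ (Fin N)) (hu : ‖u‖ = 1) (c : ℝ)
    (h0 : (0 : EuclideanSpace ℝ (Fin N)) ∈ closure (halfSpace u c))
    (v w : EuclideanSpace ℝ (Fin N) → ℝ)
    (hv : MemLp v p volume) (hw : MemLp w p volume)
    (hvw : Integrable (fun x => v x * w x) volume)
    (hvwH : Integrable (fun x => polFun u c v x * polFun u c w x) volume) :
    ∫ x, v x * w x ≤ ∫ x, polFun u c v x * polFun u c w x :=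
  polFun_hardy_littlewood_general u hu c v w hvw hvwH
end

section
/- (Reverse Hardy–Littlewood inequality for polarization.) Let p ∈ (1, ∞), let H be an open affine half-space in ℝ^N with 0 ∈ closure(H), and let Ω ⊂ ℝ^N be a bounded open set satisfying Ω = Ω_H. Let v, w ∈ L^p(Ω) be such that v·w is integrable on Ω, w is nonnegative a.e. on Ω, and the product v^H·w_H of the dual polarization of v with the polarization of w is integrable on Ω. Then ∫_Ω v^H(x) w_H(x) dx ≤ ∫_Ω v(x) w(x) dx. -/
open MeasureTheory
open scoped RealInnerProductSpace ENNReal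

/-!
The reflection `σ_H` preserves Lebesgue measure, so `∫ F = ½ ∫ (F + F ∘ σ_H)` for every
integrable `F`. Pairing `x ∈ H` with `σ_H x`, the two values of `v^H · w_H` are
`min(a, a') max(b, b')` and `max(a, a') min(b, b')`, where `a, a'` and `b, b'` are the values
of `v` and `w` at `x, σ_H x`; their sum is at most `a b + a' b'` by the rearrangement inequality.
This gives the inequality on all of `ℝ^N` for the extensions by zero. It restricts to `Ω`
because `w_H` vanishes off `Ω = Ω_H`: inside `H` both `x` and `σ_H x` lie outside `Ω`, and
outside `H` the value is `min (0, w (σ_H x)) = 0` since `w ≥ 0`.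
-/

section Reflection

variable {N : ℕ} {u : EuclideanSpace ℝ (Fin N)} {c : ℝ}

theorem reflHyp_of_inner_eq {x : EuclideanSpace ℝ (Fin N)} (hx : ⟪x, u⟫ = c) :
    reflHyp u c x = x := by
  rw [reflHyp, hx, sub_self, mul_zero, zero_smul, sub_zero]

theorem continuous_reflHyp : Continuous (reflHyp u c) := by
  unfold reflHyp
  fun_prop

noncomputable def reflHypEquiv (hu : ‖u‖ = 1) :
    EuclideanSpace ℝ (Fin N) ≃ᵐ EuclideanSpace ℝ (Fin N) :=
  MeasurableEquiv.ofInvolutive (reflHyp u c) (reflHyp_involutive hu) continuous_reflHyp.measurable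

theorem MeasureTheory.Integrable.comp_reflHyp (hu : ‖u‖ = 1) {h : EuclideanSpace ℝ (Fin N) → ℝ}
    (hh : Integrable h) : Integrable (fun x => h (reflHyp u c x)) :=
  ((measurePreserving_reflHyp hu).integrable_comp_emb
    (reflHypEquiv (c := c) hu).measurableEmbedding).2 hh

theorem integral_add_comp_reflHyp (hu : ‖u‖ = 1) {h : EuclideanSpace ℝ (Fin N) → ℝ}
    (hh : Integrable h) : ∫ x, (h x + h (reflHyp u c x)) = 2 * ∫ x, h x := by
  rw [integral_add hh (hh.comp_reflHyp hu),
    (measurePreserving_reflHyp hu).integral_comp (reflHypEquiv (c := c) hu).measurableEmbedding]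
  ring

end Reflection

theorem min_mul_max_add_max_mul_min_le (a a' b b' : ℝ) :
    min a a' * max b b' + max a a' * min b b' ≤ a * b + a' * b' := by
  rcases le_total a a' with ha | ha <;> rcases le_total b b' with hb | hb <;>
    simp only [min_eq_left, min_eq_right, max_eq_left, max_eq_right, ha, hb] <;> nlinarith

section Polarization

variable {N : ℕ} {u : EuclideanSpace ℝ (Fin N)} {c : ℝ} {f : EuclideanSpace ℝ (Fin N) → ℝ}
  {x : EuclideanSpace ℝ (Fin N)}

theorem polFun_of_lt (hx : ⟪x, u⟫ < c) : polFun u c f x = max (f x) (f (reflHyp u c x)) :=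
  if_pos hx

theorem polFun_reflHyp_of_lt (hu : ‖u‖ = 1) (hx : ⟪x, u⟫ < c) :
    polFun u c f (reflHyp u c x) = min (f x) (f (reflHyp u c x)) := by
  have hσx : ¬⟪reflHyp u c x, u⟫ < c := by rw [inner_reflHyp hu]; linarith
  rw [polFun, if_neg hσx, reflHyp_involutive hu, min_comm]

theorem polFun_of_inner_eq (hx : ⟪x, u⟫ = c) : polFun u c f x = f x := by
  rw [polFun, reflHyp_of_inner_eq hx, max_self, min_self, ite_self]

theorem polFun_comp_reflHyp_mul_add_le (hu : ‖u‖ = 1) (f g : EuclideanSpace ℝ (Fin N) → ℝ)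
    (x : EuclideanSpace ℝ (Fin N)) :
    polFun u c f (reflHyp u c x) * polFun u c g x +
        polFun u c f x * polFun u c g (reflHyp u c x) ≤
      f x * g x + f (reflHyp u c x) * g (reflHyp u c x) := by
  have inside : ∀ y, ⟪y, u⟫ < c →
      polFun u c f (reflHyp u c y) * polFun u c g y +
          polFun u c f y * polFun u c g (reflHyp u c y) ≤
        f y * g y + f (reflHyp u c y) * g (reflHyp u c y) := by
    intro y hy
    rw [polFun_of_lt hy, polFun_of_lt hy, polFun_reflHyp_of_lt hu hy, polFun_reflHyp_of_lt hu hy]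
    exact min_mul_max_add_max_mul_min_le _ _ _ _
  rcases lt_trichotomy ⟪x, u⟫ c with hx | hx | hx
  · exact inside x hx
  · rw [reflHyp_of_inner_eq hx, polFun_of_inner_eq hx, polFun_of_inner_eq hx]
  · have := inside (reflHyp u c x) (by rw [inner_reflHyp hu]; linarith)
    rw [reflHyp_involutive hu] at this
    linarith

theorem integral_polFun_comp_reflHyp_mul_le (hu : ‖u‖ = 1) {f g : EuclideanSpace ℝ (Fin N) → ℝ}
    (hF : Integrable fun x => polFun u c f (reflHyp u c x) * polFun u c g x)
    (hG : Integrable fun x => f x * g x) :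
    ∫ x, polFun u c f (reflHyp u c x) * polFun u c g x ≤ ∫ x, f x * g x := by
  have hsum : ∫ x, (polFun u c f (reflHyp u c x) * polFun u c g x +
        polFun u c f (reflHyp u c (reflHyp u c x)) * polFun u c g (reflHyp u c x)) ≤
      ∫ x, (f x * g x + f (reflHyp u c x) * g (reflHyp u c x)) := by
    refine integral_mono (hF.add (hF.comp_reflHyp hu)) (hG.add (hG.comp_reflHyp hu)) fun x => ?_
    simpa only [reflHyp_involutive hu x] using polFun_comp_reflHyp_mul_add_le hu f g x
  rw [integral_add_comp_reflHyp hu hF, integral_add_comp_reflHyp hu hG] at hsum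
  linarith

theorem polFun_eq_zero_of_notMem {Ω : Set (EuclideanSpace ℝ (Fin N))} (hu : ‖u‖ = 1)
    (hΩ : Ω = polSet u c Ω) (hf : ∀ y ∉ Ω, f y = 0) (hx : x ∉ Ω)
    (hσx : 0 ≤ f (reflHyp u c x)) : polFun u c f x = 0 := by
  by_cases hxH : ⟪x, u⟫ < c
  · have hσxΩ : reflHyp u c x ∉ Ω := fun h =>
      hx (hΩ ▸ Or.inl ⟨Or.inr ⟨reflHyp u c x, h, reflHyp_involutive hu x⟩, hxH⟩)
    rw [polFun_of_lt hxH, hf x hx, hf _ hσxΩ, max_self]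
  · rw [polFun, if_neg hxH, hf x hx, min_eq_left hσx]

end Polarization

theorem polFun_reverse_hardy_littlewood_general {N : ℕ}
    (u : EuclideanSpace ℝ (Fin N)) (hu : ‖u‖ = 1) (c : ℝ)
    (Ω : Set (EuclideanSpace ℝ (Fin N))) (hopen : IsOpen Ω)
    (hΩ : Ω = polSet u c Ω)
    (v w : EuclideanSpace ℝ (Fin N) → ℝ)
    (hvw : Integrable (fun x => v x * w x) (volume.restrict Ω))
    (hwpos : ∀ᵐ x ∂volume.restrict Ω, 0 ≤ w x)
    (hvwH : Integrable
      (fun x => polFun u c (Ω.indicator v) (reflHyp u c x) * polFun u c (Ω.indicator w) x)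
      (volume.restrict Ω)) :
    ∫ x in Ω, polFun u c (Ω.indicator v) (reflHyp u c x) * polFun u c (Ω.indicator w) x ≤
      ∫ x in Ω, v x * w x := by
  have hΩm : MeasurableSet Ω := hopen.measurableSet
  have hw_nonneg : ∀ᵐ x, 0 ≤ Ω.indicator w x := by
    filter_upwards [(ae_restrict_iff' hΩm).1 hwpos] with x hx using Set.indicator_apply_nonneg hx
  have hwσ_nonneg : ∀ᵐ x, 0 ≤ Ω.indicator w (reflHyp u c x) :=
    (measurePreserving_reflHyp hu).quasiMeasurePreserving.ae hw_nonneg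
  have hvanish : ∀ᵐ x, x ∉ Ω →
      polFun u c (Ω.indicator v) (reflHyp u c x) * polFun u c (Ω.indicator w) x = 0 := by
    filter_upwards [hwσ_nonneg] with x hx hxΩ
    rw [polFun_eq_zero_of_notMem hu hΩ (fun y hy => Set.indicator_of_notMem hy w) hxΩ hx,
      mul_zero]
  have hprod : (fun x => Ω.indicator v x * Ω.indicator w x) = Ω.indicator fun x => v x * w x :=
    (Set.indicator_mul Ω v w).symm
  rw [setIntegral_eq_integral_of_ae_compl_eq_zero hvanish, ← integral_indicator hΩm, ← hprod]
  exact integral_polFun_comp_reflHyp_mul_le hu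
    (IntegrableOn.integrable_of_ae_notMem_eq_zero hvwH hvanish)
    (hprod ▸ (integrable_indicator_iff hΩm).2 hvw)

/-- (Reverse Hardy–Littlewood inequality for polarization.) For `p ∈ (1, ∞)`,
a half-space `H` with `0 ∈ closure H`, a bounded open `Ω` with `Ω = Ω_H`, and `v, w ∈ L^p(Ω)`
with `v·w` integrable on `Ω`, `w` nonnegative a.e. on `Ω` and `v^H·w_H` integrable on `Ω`,
one has `∫_Ω v^H w_H ≤ ∫_Ω v w`, where `v^H = v_H ∘ σ_H` is the dual polarization. -/
theorem polFun_reverse_hardy_littlewood {N : ℕ} (p : ℝ≥0∞) (hp1 : 1 < p) (hptop : p ≠ ⊤)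
    (u : EuclideanSpace ℝ (Fin N)) (hu : ‖u‖ = 1) (c : ℝ)
    (h0 : (0 : EuclideanSpace ℝ (Fin N)) ∈ closure (halfSpace u c))
    (Ω : Set (EuclideanSpace ℝ (Fin N))) (hbdd : Bornology.IsBounded Ω) (hopen : IsOpen Ω)
    (hΩ : Ω = polSet u c Ω)
    (v w : EuclideanSpace ℝ (Fin N) → ℝ)
    (hv : MemLp v p (volume.restrict Ω)) (hw : MemLp w p (volume.restrict Ω))
    (hvw : Integrable (fun x => v x * w x) (volume.restrict Ω))
    (hwpos : ∀ᵐ x ∂volume.restrict Ω, 0 ≤ w x)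
    (hvwH : Integrable
      (fun x => polFun u c (Ω.indicator v) (reflHyp u c x) * polFun u c (Ω.indicator w) x)
      (volume.restrict Ω)) :
    ∫ x in Ω, polFun u c (Ω.indicator v) (reflHyp u c x) * polFun u c (Ω.indicator w) x ≤
      ∫ x in Ω, v x * w x :=
  polFun_reverse_hardy_littlewood_general u hu c Ω hopen hΩ v w hvw hwpos hvwH
end

section
/- Let f : B_1(0) → ℝ be a function on the open unit ball of ℝ^N such that for every open affine half-space H ⊂ ℝ^N with 0 ∈ H, the polarization f_H (defined on B_1(0) via the zero extension of f) coincides with f on B_1(0). Then f(x) ≥ f(y) for all x, y ∈ B_1(0) with |x| < |y|. -/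
open MeasureTheory
open scoped RealInnerProductSpace ENNReal

/-!
Given `‖x‖ < ‖y‖`, reflect across the perpendicular bisector of `x` and `y`. The reflection swaps
`x` and `y`, and the open side of the bisector containing `x` is the set of points closer to `x`
than to `y`, so it contains `0`. Polarization invariance for that half-space gives
`f x = max (f x) (f y)`.
-/

section

variable {N : ℕ}

theorem le_polFun_of_mem_halfSpace {u x : EuclideanSpace ℝ (Fin N)} {c : ℝ}
    (f : EuclideanSpace ℝ (Fin N) → ℝ) (hx : x ∈ halfSpace u c) :
    f (reflHyp u c x) ≤ polFun u c f x := by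
  rw [polFun, if_pos (show ⟪x, u⟫ < c from hx)]
  exact le_max_right _ _

noncomputable def bisectorNormal (x y : EuclideanSpace ℝ (Fin N)) : EuclideanSpace ℝ (Fin N) :=
  ‖y - x‖⁻¹ • (y - x)

noncomputable def bisectorLevel (x y : EuclideanSpace ℝ (Fin N)) : ℝ :=
  ⟪x + y, bisectorNormal x y⟫ / 2

variable {x y : EuclideanSpace ℝ (Fin N)}

theorem norm_bisectorNormal (h : x ≠ y) : ‖bisectorNormal x y‖ = 1 := by
  rw [bisectorNormal, norm_smul, norm_inv, norm_norm,
    inv_mul_cancel₀ (norm_ne_zero_iff.2 (sub_ne_zero.2 h.symm))]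

theorem inner_bisectorNormal_sub_bisectorLevel (z : EuclideanSpace ℝ (Fin N)) :
    ⟪z, bisectorNormal x y⟫ - bisectorLevel x y
      = (‖z - x‖ ^ 2 - ‖z - y‖ ^ 2) / (2 * ‖y - x‖) := by
  have key : ⟪z, y - x⟫ - ⟪x + y, y - x⟫ / 2 = (‖z - x‖ ^ 2 - ‖z - y‖ ^ 2) / 2 := by
    simp only [norm_sub_sq_real, inner_sub_right, inner_add_left, real_inner_self_eq_norm_sq,
      real_inner_comm x y, real_inner_comm x z, real_inner_comm y z]
    ring
  rw [bisectorLevel, bisectorNormal, real_inner_smul_right, real_inner_smul_right, ← div_div, ← key]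
  ring

theorem mem_halfSpace_bisector_iff (h : x ≠ y) {z : EuclideanSpace ℝ (Fin N)} :
    z ∈ halfSpace (bisectorNormal x y) (bisectorLevel x y) ↔ dist z x < dist z y := by
  have hr : 0 < 2 * ‖y - x‖ := by positivity [sub_ne_zero.2 h.symm]
  rw [halfSpace, Set.mem_ofPred_eq, ← sub_neg, inner_bisectorNormal_sub_bisectorLevel,
    div_lt_iff₀ hr, zero_mul, sub_neg, sq_lt_sq₀ (norm_nonneg _) (norm_nonneg _),
    dist_eq_norm, dist_eq_norm]

theorem reflHyp_bisector (h : x ≠ y) :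
    reflHyp (bisectorNormal x y) (bisectorLevel x y) x = y := by
  have hr : ‖y - x‖ ≠ 0 := norm_ne_zero_iff.2 (sub_ne_zero.2 h.symm)
  have hcoeff : 2 * ((‖x - x‖ ^ 2 - ‖x - y‖ ^ 2) / (2 * ‖y - x‖)) * ‖y - x‖⁻¹ = -1 := by
    rw [sub_self, norm_zero, norm_sub_rev]
    field_simp
    ring
  rw [reflHyp, inner_bisectorNormal_sub_bisectorLevel, bisectorNormal, smul_smul, hcoeff,
    neg_one_smul, sub_neg_eq_add, add_sub_cancel]

end

/-- If a function on the unit ball is polarization invariant with respect to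
every open affine half-space containing the origin, then it is radially decreasing:
`f x ≥ f y` whenever `‖x‖ < ‖y‖`. -/
theorem polFun_invariant_radially_decreasing {N : ℕ}
    (f : EuclideanSpace ℝ (Fin N) → ℝ)
    (hpol : ∀ (u : EuclideanSpace ℝ (Fin N)) (c : ℝ), ‖u‖ = 1 →
      (0 : EuclideanSpace ℝ (Fin N)) ∈ halfSpace u c →
      ∀ x ∈ Metric.ball (0 : EuclideanSpace ℝ (Fin N)) 1,
        polFun u c ((Metric.ball (0 : EuclideanSpace ℝ (Fin N)) 1).indicator f) x = f x) :
    ∀ x ∈ Metric.ball (0 : EuclideanSpace ℝ (Fin N)) 1,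
      ∀ y ∈ Metric.ball (0 : EuclideanSpace ℝ (Fin N)) 1, ‖x‖ < ‖y‖ → f y ≤ f x := by
  intro x hx y hy hxy
  have hne : x ≠ y := by rintro rfl; exact lt_irrefl _ hxy
  have h0 : (0 : EuclideanSpace ℝ (Fin N)) ∈ halfSpace (bisectorNormal x y) (bisectorLevel x y) :=
    (mem_halfSpace_bisector_iff hne).2 (by simpa using hxy)
  have hxH : x ∈ halfSpace (bisectorNormal x y) (bisectorLevel x y) :=
    (mem_halfSpace_bisector_iff hne).2 (by simpa using hne)
  calc f y = (Metric.ball 0 1).indicator f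
        (reflHyp (bisectorNormal x y) (bisectorLevel x y) x) := by
          rw [reflHyp_bisector hne, Set.indicator_of_mem hy]
    _ ≤ polFun (bisectorNormal x y) (bisectorLevel x y) ((Metric.ball 0 1).indicator f) x :=
          le_polFun_of_mem_halfSpace _ hxH
    _ = f x := hpol _ _ (norm_bisectorNormal hne) h0 x hx
end
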